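/- arXiv:2012.07066 — 5 statements merged into one kernel-verified Lean document; each statement's English description precedes it below -/
import Mathlib

section
/- Let (aₙ) and (bₙ) be sequences with 0 < aₙ ≤ 1 and 0 < bₙ ≤ 1 for all n, and suppose aₙ + bₙ → 2 as n → ∞. Then the area under the screening curve tends to the area of the unit square: ∫₀¹ aₙφ/(aₙφ + (1−bₙ)(1−φ)) dφ → 1 as n → ∞. (Fundamental theorem of screening: lim_{ε→2} ∫₀¹ ρ(φ) dφ = 1, where ε = a + b.) -/
open Filter Topology

/-- The screening curve: positive predictive value as a function of
pretest probability (prevalence) `φ`, for sensitivity `a` and specificity `b`. -/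
noncomputable def screeningCurve (a b φ : ℝ) : ℝ :=
  a * φ / (a * φ + (1 - b) * (1 - φ))

lemma sc_nonneg {a b φ : ℝ} (ha : 0 < a) (hb : b ≤ 1) (h0 : 0 ≤ φ) (h1 : φ ≤ 1) :
    0 ≤ screeningCurve a b φ :=
  div_nonneg (mul_nonneg ha.le h0) (by nlinarith)

lemma sc_le_one {a b φ : ℝ} (ha : 0 < a) (hb : b ≤ 1) (h0 : 0 ≤ φ) (h1 : φ ≤ 1) :
    screeningCurve a b φ ≤ 1 :=
  div_le_one_of_le₀ (by nlinarith) (by nlinarith)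

lemma sc_ge {a b φ δ : ℝ} (ha : 0 < a) (hb : b ≤ 1) (hδ : 0 < δ) (hδ1 : δ ≤ 1)
    (hc : 1 - b ≤ a * δ ^ 2) (h0 : δ ≤ φ) (h1 : φ ≤ 1) :
    1 - δ ≤ screeningCurve a b φ := by
  have hφ0 : 0 < φ := lt_of_lt_of_le hδ h0
  have hD : 0 < a * φ + (1 - b) * (1 - φ) := by nlinarith
  rw [screeningCurve, le_div_iff₀ hD]
  nlinarith [mul_nonneg (sub_nonneg.2 hb) (sub_nonneg.2 h1),
    mul_nonneg (mul_nonneg ha.le hδ.le) (sub_nonneg.2 h0),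
    mul_nonneg (mul_nonneg (sub_nonneg.2 hb) hδ.le) (sub_nonneg.2 h1),
    mul_nonneg (mul_nonneg (sub_nonneg.2 hb) (sub_nonneg.2 h1)) hφ0.le]

lemma sc_intervalIntegrable {a b : ℝ} (ha : 0 < a) (hb : b ≤ 1) {s t : ℝ}
    (hs : s ∈ Set.Icc (0:ℝ) 1) (ht : t ∈ Set.Icc (0:ℝ) 1) :
    IntervalIntegrable (screeningCurve a b) MeasureTheory.volume s t := by
  have hmeas : Measurable (screeningCurve a b) := by
    unfold screeningCurve
    fun_prop
  rw [intervalIntegrable_iff]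
  haveI : MeasureTheory.IsFiniteMeasure (MeasureTheory.volume.restrict (Set.uIoc s t)) := by
    constructor
    rw [MeasureTheory.Measure.restrict_apply_univ]
    simp [Set.uIoc, Real.volume_Ioc]
  apply MeasureTheory.Integrable.mono' (MeasureTheory.integrable_const (1:ℝ))
    hmeas.aestronglyMeasurable.restrict
  filter_upwards [MeasureTheory.ae_restrict_mem measurableSet_uIoc] with x hx
  have hx0 : 0 ≤ x := le_of_lt (lt_of_le_of_lt (le_min hs.1 ht.1) hx.1)
  have hx1 : x ≤ 1 := le_trans hx.2 (max_le hs.2 ht.2)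
  rw [Real.norm_eq_abs, abs_of_nonneg (sc_nonneg ha hb hx0 hx1)]
  exact sc_le_one ha hb hx0 hx1

/-- Fundamental theorem of screening: if `aₙ + bₙ → 2`, then the
area under the screening curve tends to `1`. -/
theorem fundamental_theorem_of_screening (a b : ℕ → ℝ)
    (ha : ∀ n, 0 < a n) (ha' : ∀ n, a n ≤ 1)
    (hb : ∀ n, 0 < b n) (hb' : ∀ n, b n ≤ 1)
    (hε : Tendsto (fun n => a n + b n) atTop (𝓝 2)) :
    Tendsto (fun n => ∫ φ in (0:ℝ)..1, screeningCurve (a n) (b n) φ)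
      atTop (𝓝 1) := by
  -- a n → 1 and (1 - b n) → 0
  have hA : Tendsto a atTop (𝓝 1) := by
    have h1 : Tendsto (fun n => a n + b n - 1) atTop (𝓝 1) := by
      have := hε.sub_const 1
      norm_num at this
      exact this
    exact tendsto_of_tendsto_of_tendsto_of_le_of_le h1 tendsto_const_nhds
      (fun n => by linarith [hb' n]) (fun n => ha' n)
  have hB : Tendsto b atTop (𝓝 1) := by
    have h1 : Tendsto (fun n => a n + b n - 1) atTop (𝓝 1) := by
      have := hε.sub_const 1
      norm_num at this
      exact this
    exact tendsto_of_tendsto_of_tendsto_of_le_of_le h1 tendsto_const_nhds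
      (fun n => by linarith [ha' n]) (fun n => hb' n)
  have hC : Tendsto (fun n => 1 - b n) atTop (𝓝 0) := by
    have := (tendsto_const_nhds (x := (1:ℝ)) (f := atTop)).sub hB
    norm_num at this
    exact this
  rw [Metric.tendsto_atTop]
  intro ε hεpos
  set δ : ℝ := min (ε / 3) (1 / 2) with hδdef
  have hδ0 : 0 < δ := lt_min (by linarith) (by norm_num)
  have hδ1 : δ ≤ 1 := le_trans (min_le_right _ _) (by norm_num)
  have hδε : δ ≤ ε / 3 := min_le_left _ _
  have hev1 : ∀ᶠ n in atTop, (1:ℝ)/2 < a n :=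
    hA.eventually (eventually_gt_nhds (by norm_num))
  have hev2 : ∀ᶠ n in atTop, 1 - b n < δ ^ 2 / 2 :=
    hC.eventually (eventually_lt_nhds (by positivity))
  obtain ⟨N, hN⟩ := eventually_atTop.1 (hev1.and hev2)
  refine ⟨N, fun n hn => ?_⟩
  obtain ⟨hn1, hn2⟩ := hN n hn
  have hcn : 1 - b n ≤ a n * δ ^ 2 := by nlinarith [sq_nonneg δ]
  have mem01 : ∀ x : ℝ, x ∈ Set.Icc (0:ℝ) 1 → x ∈ Set.Icc (0:ℝ) 1 := fun x h => h
  have h0m : (0:ℝ) ∈ Set.Icc (0:ℝ) 1 := by constructor <;> norm_num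
  have h1m : (1:ℝ) ∈ Set.Icc (0:ℝ) 1 := by constructor <;> norm_num
  have hδm : δ ∈ Set.Icc (0:ℝ) 1 := ⟨hδ0.le, hδ1⟩
  have hint1 : IntervalIntegrable (screeningCurve (a n) (b n)) MeasureTheory.volume 0 δ :=
    sc_intervalIntegrable (ha n) (hb' n) h0m hδm
  have hint2 : IntervalIntegrable (screeningCurve (a n) (b n)) MeasureTheory.volume δ 1 :=
    sc_intervalIntegrable (ha n) (hb' n) hδm h1m
  have hint01 : IntervalIntegrable (screeningCurve (a n) (b n)) MeasureTheory.volume 0 1 :=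
    hint1.trans hint2
  have hsplit : (∫ φ in (0:ℝ)..δ, screeningCurve (a n) (b n) φ)
      + (∫ φ in δ..(1:ℝ), screeningCurve (a n) (b n) φ)
      = ∫ φ in (0:ℝ)..1, screeningCurve (a n) (b n) φ :=
    intervalIntegral.integral_add_adjacent_intervals hint1 hint2
  have hlow1 : 0 ≤ ∫ φ in (0:ℝ)..δ, screeningCurve (a n) (b n) φ :=
    intervalIntegral.integral_nonneg hδ0.le
      (fun x hx => sc_nonneg (ha n) (hb' n) hx.1 (le_trans hx.2 hδ1))
  have hlow2 : (1 - δ) * (1 - δ) ≤ ∫ φ in δ..(1:ℝ), screeningCurve (a n) (b n) φ := by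
    have := intervalIntegral.integral_mono_on (f := fun _ : ℝ => (1 - δ))
      hδ1 intervalIntegrable_const hint2
      (fun x hx => sc_ge (ha n) (hb' n) hδ0 hδ1 hcn hx.1 hx.2)
    rwa [intervalIntegral.integral_const, smul_eq_mul] at this
  have hup : (∫ φ in (0:ℝ)..1, screeningCurve (a n) (b n) φ) ≤ 1 := by
    have := intervalIntegral.integral_mono_on (g := fun _ : ℝ => (1:ℝ))
      zero_le_one hint01 intervalIntegrable_const
      (fun x hx => sc_le_one (ha n) (hb' n) hx.1 hx.2)
    simpa using this
  have hlow : 1 - 2 * δ ≤ ∫ φ in (0:ℝ)..1, screeningCurve (a n) (b n) φ := by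
    rw [← hsplit]; nlinarith
  rw [Real.dist_eq, abs_of_nonpos (by linarith)]
  linarith
end

section
/- If 0 < a < 1 and 0 < b < 1, then the value of the screening curve at the prevalence threshold is ρ(φ_e) = √a/(√a + √(1−b)); equivalently, ρ(φ_e) = √(a/(1−b)) · φ_e, so the screening curve passes through the point (√(1−b)/(√a+√(1−b)), √(a/(1−b))·√(1−b)/(√a+√(1−b))). -/
/-- The prevalence threshold. -/
noncomputable def prevalenceThreshold (a b : ℝ) : ℝ :=
  Real.sqrt (1 - b) / (Real.sqrt a + Real.sqrt (1 - b))

/-- value of the screening curve at the prevalence threshold. -/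
theorem screening_curve_at_threshold (a b : ℝ) (ha : 0 < a) (ha' : a < 1)
    (hb : 0 < b) (hb' : b < 1) :
    screeningCurve a b (prevalenceThreshold a b) =
        Real.sqrt a / (Real.sqrt a + Real.sqrt (1 - b)) ∧
      screeningCurve a b (prevalenceThreshold a b) =
        Real.sqrt (a / (1 - b)) * prevalenceThreshold a b := by
  have h1b : (0:ℝ) < 1 - b := by linarith
  set s := Real.sqrt a with hsdef
  set t := Real.sqrt (1 - b) with htdef
  have hs : 0 < s := Real.sqrt_pos.mpr ha
  have ht : 0 < t := Real.sqrt_pos.mpr h1b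
  have has : a = s ^ 2 := by rw [hsdef, Real.sq_sqrt ha.le]
  have hbt : 1 - b = t ^ 2 := by rw [htdef, Real.sq_sqrt h1b.le]
  have hst : 0 < s + t := by linarith
  have hdiv : Real.sqrt (a / (1 - b)) = s / t := by
    rw [Real.sqrt_div ha.le]
  have key : screeningCurve a b (prevalenceThreshold a b) = s / (s + t) := by
    unfold screeningCurve prevalenceThreshold
    rw [← hsdef, ← htdef, has, hbt]
    have hden : s ^ 2 * (t / (s + t)) + t ^ 2 * (1 - t / (s + t)) = s * t := by
      field_simp
      ring
    rw [hden]
    rw [div_eq_div_iff (by positivity) hst.ne']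
    field_simp
  refine ⟨key, ?_⟩
  rw [key, hdiv]
  unfold prevalenceThreshold
  rw [← hsdef, ← htdef]
  field_simp
end

section
/- If 0 < a < 1 and 0 < b < 1, then the slope of the line through the origin (0,0) and the point (φ_e, ρ(φ_e)) on the screening curve equals √(a/(1−b)); that is, ρ(φ_e)/φ_e = √(a/(1−b)). -/
/-- the slope of the line from the origin to the prevalence
threshold point on the screening curve equals `√(a/(1−b))`. -/
theorem slope_origin_to_threshold (a b : ℝ) (ha : 0 < a) (ha' : a < 1)
    (hb : 0 < b) (hb' : b < 1) :
    screeningCurve a b (prevalenceThreshold a b) / prevalenceThreshold a b =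
      Real.sqrt (a / (1 - b)) := by
  have hb1 : (0:ℝ) < 1 - b := by linarith
  set s := Real.sqrt a with hsdef
  set t := Real.sqrt (1 - b) with htdef
  have hs : 0 < s := Real.sqrt_pos.mpr ha
  have ht : 0 < t := Real.sqrt_pos.mpr hb1
  have hs2 : s ^ 2 = a := Real.sq_sqrt ha.le
  have ht2 : t ^ 2 = 1 - b := Real.sq_sqrt hb1.le
  have hrhs : Real.sqrt (a / (1 - b)) = s / t := Real.sqrt_div ha.le _
  rw [hrhs]
  unfold screeningCurve prevalenceThreshold
  rw [← hsdef, ← htdef, ← hs2, ← ht2]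
  have hst : s + t ≠ 0 := by positivity
  have hden : s ^ 2 * (t / (s + t)) + t ^ 2 * (1 - t / (s + t)) = s * t := by
    field_simp
    ring
  rw [hden]
  field_simp
end

section
/- If 0 < a < 1 and 0 < b < 1, then the slope of the line through the point (φ_e, ρ(φ_e)) on the screening curve and the invariant point (1,1) equals √((1−b)/a); that is, (1 − ρ(φ_e))/(1 − φ_e) = √((1−b)/a). -/
/-! Write `s = √a` and `t = √(1 - b)`, so that `φ_e = t / (s + t)`. At `φ_e` the two terms of the
denominator of `ρ` are `s² t / (s + t)` and `t² s / (s + t)`, so `ρ(φ_e) = s / (s + t) = 1 - φ_e`: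
the threshold point lies on the anti-diagonal, and the slope to `(1, 1)` is
`φ_e / (1 - φ_e) = t / s`. -/

theorem one_sub_prevalenceThreshold {a : ℝ} (ha : 0 < a) (b : ℝ) :
    1 - prevalenceThreshold a b = √a / (√a + √(1 - b)) := by
  have hsum : √a + √(1 - b) ≠ 0 := by positivity
  rw [prevalenceThreshold]
  field_simp
  ring

theorem screeningCurve_sq_sq {s t : ℝ} (hs : 0 < s) (ht : 0 < t) :
    screeningCurve (s ^ 2) (1 - t ^ 2) (t / (s + t)) = s / (s + t) := by
  have hst : s + t ≠ 0 := by positivity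
  have hden : s ^ 2 * (t / (s + t)) + (1 - (1 - t ^ 2)) * (1 - t / (s + t)) = s * t := by
    field_simp
    ring
  rw [screeningCurve, hden]
  field_simp

theorem screeningCurve_prevalenceThreshold {a b : ℝ} (ha : 0 < a) (hb : b < 1) :
    screeningCurve a b (prevalenceThreshold a b) = 1 - prevalenceThreshold a b := by
  have h := screeningCurve_sq_sq (Real.sqrt_pos.mpr ha) (Real.sqrt_pos.mpr (sub_pos.mpr hb))
  rwa [Real.sq_sqrt ha.le, Real.sq_sqrt (sub_pos.mpr hb).le, sub_sub_cancel,
    ← one_sub_prevalenceThreshold ha] at h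

theorem prevalenceThreshold_div_one_sub {a : ℝ} (ha : 0 < a) (b : ℝ) :
    prevalenceThreshold a b / (1 - prevalenceThreshold a b) = √(1 - b) / √a := by
  have hs : 0 < √a := Real.sqrt_pos.mpr ha
  have hsum : √a + √(1 - b) ≠ 0 := by positivity
  rw [one_sub_prevalenceThreshold ha, prevalenceThreshold]
  field_simp

theorem slope_threshold_to_one_general (a b : ℝ) (ha : 0 < a)
    (hb' : b < 1) :
    (1 - screeningCurve a b (prevalenceThreshold a b)) /
        (1 - prevalenceThreshold a b) =
      Real.sqrt ((1 - b) / a) := by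
  rw [screeningCurve_prevalenceThreshold ha hb', sub_sub_cancel,
    prevalenceThreshold_div_one_sub ha, Real.sqrt_div' _ ha.le]

/-- the slope of the line from the prevalence threshold point on
the screening curve to the invariant point (1,1) equals `√((1−b)/a)`. -/
theorem slope_threshold_to_one (a b : ℝ) (ha : 0 < a) (ha' : a < 1)
    (hb : 0 < b) (hb' : b < 1) :
    (1 - screeningCurve a b (prevalenceThreshold a b)) /
        (1 - prevalenceThreshold a b) =
      Real.sqrt ((1 - b) / a) :=
  slope_threshold_to_one_general a b ha hb'
end

section
/- Let a₁, b₁, a₂, b₂ ∈ (0,1) with equal screening coefficients a₁ + b₁ = a₂ + b₂, and suppose (1−b₂)/a₂ < (1−b₁)/a₁. Then the areas under the two screening curves differ, with ∫₀¹ ρ₂(φ) dφ > ∫₀¹ ρ₁(φ) dφ; in particular, the value of ε = a + b does not determine the screening curve (ε is non-commutative in a and b). -/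
lemma screening_denom_pos {a b : ℝ} (ha : 0 < a) (hb : b < 1) {φ : ℝ}
    (hφ : φ ∈ Set.Icc (0:ℝ) 1) : 0 < a * φ + (1 - b) * (1 - φ) := by
  obtain ⟨h0, h1⟩ := hφ
  nlinarith [mul_nonneg ha.le h0, mul_nonneg (sub_pos.mpr hb).le (sub_nonneg.mpr h1)]

lemma screening_continuousOn {a b : ℝ} (ha : 0 < a) (hb : b < 1) :
    ContinuousOn (screeningCurve a b) (Set.Icc (0:ℝ) 1) := by
  apply ContinuousOn.div (by fun_prop) (by fun_prop)
  intro φ hφ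
  exact (screening_denom_pos ha hb hφ).ne'

/-- two tests with equal screening coefficient `ε = a + b` but
`(1−b₂)/a₂ < (1−b₁)/a₁` have different areas under their screening curves,
with the second area strictly larger. -/
theorem epsilon_noncommutative (a₁ b₁ a₂ b₂ : ℝ)
    (ha₁ : 0 < a₁) (ha₁' : a₁ < 1) (hb₁ : 0 < b₁) (hb₁' : b₁ < 1)
    (ha₂ : 0 < a₂) (ha₂' : a₂ < 1) (hb₂ : 0 < b₂) (hb₂' : b₂ < 1)
    (hε : a₁ + b₁ = a₂ + b₂)
    (h : (1 - b₂) / a₂ < (1 - b₁) / a₁) :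
    (∫ φ in (0:ℝ)..1, screeningCurve a₁ b₁ φ) <
      ∫ φ in (0:ℝ)..1, screeningCurve a₂ b₂ φ := by
  have key : a₁ * (1 - b₂) < a₂ * (1 - b₁) := by
    rw [div_lt_div_iff₀ ha₂ ha₁] at h
    nlinarith
  have hle : ∀ φ ∈ Set.Icc (0:ℝ) 1,
      screeningCurve a₁ b₁ φ ≤ screeningCurve a₂ b₂ φ := by
    intro φ hφ
    obtain ⟨h0, h1⟩ := hφ
    have d₁ := screening_denom_pos ha₁ hb₁' ⟨h0, h1⟩
    have d₂ := screening_denom_pos ha₂ hb₂' ⟨h0, h1⟩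
    rw [screeningCurve, screeningCurve, div_le_div_iff₀ d₁ d₂]
    nlinarith [mul_nonneg (mul_nonneg h0 (sub_nonneg.mpr h1)) (sub_nonneg.mpr key.le)]
  have hlt : screeningCurve a₁ b₁ (1/2) < screeningCurve a₂ b₂ (1/2) := by
    have hm : (1/2 : ℝ) ∈ Set.Icc (0:ℝ) 1 := by norm_num
    have d₁ := screening_denom_pos ha₁ hb₁' hm
    have d₂ := screening_denom_pos ha₂ hb₂' hm
    rw [screeningCurve, screeningCurve, div_lt_div_iff₀ d₁ d₂]
    nlinarith
  exact intervalIntegral.integral_lt_integral_of_continuousOn_of_le_of_exists_lt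
    one_pos (screening_continuousOn ha₁ hb₁') (screening_continuousOn ha₂ hb₂')
    (fun x hx => hle x ⟨hx.1.le, hx.2⟩) ⟨1/2, by norm_num, hlt⟩
end
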